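/- In the quotient ring 𝔽₂[u₁,u₂]/(u₁^{d+1}, u₂^{d+1}) with d = 3·2^{q+1} − 2 (q ≥ 0), the product (u₁u₂(u₁+u₂))^{2^{q+2}−2} · u₂^{2} equals u₁^d u₂^d. -/

import Mathlib

open MvPolynomial

/-- The ideal `(u₁^{d+1}, …, u_k^{d+1})` of the truncated polynomial ring. -/
noncomputable def truncIdeal (k d : ℕ) : Ideal (MvPolynomial (Fin k) (ZMod 2)) :=
  Ideal.span (Set.range fun i : Fin k => (X i : MvPolynomial (Fin k) (ZMod 2)) ^ (d + 1))

/-! In characteristic 2 all binomial coefficients of `2 ^ k - 1` are odd, so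
`(u₁ + u₂) ^ (2 ^ (q + 2) - 2) = (u₁² + u₂²) ^ (2 ^ (q + 1) - 1)` is the sum of all monomials
`u₁ ^ (2i) * u₂ ^ (2 ^ (q + 2) - 2 - 2i)`. After multiplying by `(u₁u₂) ^ (2 ^ (q + 2) - 2) * u₂²`,
the exponent of `u₂` exceeds `d` for `i < 2 ^ q` and that of `u₁` for `i > 2 ^ q`, so only the
term `i = 2 ^ q`, which is `u₁ ^ d * u₂ ^ d`, survives. -/

open Finset

section

variable {R : Type*} [CommSemiring R] [ExpChar R 2]

theorem add_pow_two_pow_sub_one (x y : R) (k : ℕ) :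
    (x + y) ^ (2 ^ k - 1) = ∑ i ∈ range (2 ^ k), x ^ i * y ^ (2 ^ k - 1 - i) := by
  induction k with
  | zero => simp
  | succ k ih =>
    set n := 2 ^ k
    have hn : 1 ≤ n := Nat.one_le_two_pow
    rw [show 2 ^ (k + 1) = n + n by rw [pow_succ]; omega, show n + n - 1 = n + (n - 1) by omega,
      pow_add, add_pow_expChar_pow, ih, sum_range_add, add_mul, mul_sum, mul_sum, add_comm]
    congr 1 <;> refine sum_congr rfl fun i hi => ?_ <;> rw [mem_range] at hi
    · rw [show n + (n - 1) - i = n + (n - 1 - i) by omega, pow_add]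
      ring
    · rw [show n + (n - 1) - (n + i) = n - 1 - i by omega, pow_add]
      ring

theorem mul_mul_add_pow_two_pow_sub_two_mul_sq (x y : R) (k : ℕ) :
    (x * y * (x + y)) ^ (2 ^ (k + 1) - 2) * y ^ 2 =
      ∑ i ∈ range (2 ^ k), x ^ (2 ^ (k + 1) - 2 + 2 * i) * y ^ (2 ^ (k + 2) - 2 - 2 * i) := by
  set n := 2 ^ k
  have hn : 1 ≤ n := Nat.one_le_two_pow
  have hsq : (x + y) ^ (2 ^ (k + 1) - 2) = (x ^ 2 + y ^ 2) ^ (n - 1) := by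
    rw [show 2 ^ (k + 1) - 2 = 2 * (n - 1) by rw [pow_succ]; omega, pow_mul,
      add_pow_expChar]
  rw [mul_pow, hsq, add_pow_two_pow_sub_one, mul_sum, sum_mul]
  refine sum_congr rfl fun i hi => ?_
  rw [mem_range] at hi
  rw [show 2 ^ (k + 2) - 2 - 2 * i = 2 ^ (k + 1) - 2 + 2 * (n - 1 - i) + 2 by
    rw [pow_succ, pow_succ] at *; omega]
  ring

end

theorem X_pow_mem_truncIdeal {k d e : ℕ} (j : Fin k) (h : d < e) : X j ^ e ∈ truncIdeal k d :=
  (truncIdeal k d).pow_mem_of_pow_mem (Ideal.subset_span ⟨j, rfl⟩) h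

theorem X_pow_mul_X_pow_mem_truncIdeal {k d m n : ℕ} (i j : Fin k) (h : d < m ∨ d < n) :
    X i ^ m * X j ^ n ∈ truncIdeal k d := by
  rcases h with h | h
  · exact Ideal.mul_mem_right _ _ (X_pow_mem_truncIdeal i h)
  · exact Ideal.mul_mem_left _ _ (X_pow_mem_truncIdeal j h)

/-- In `𝔽₂[u₁,u₂]/(u₁^{d+1},u₂^{d+1})` with `d = 3·2^{q+1} − 2`,
`(u₁u₂(u₁+u₂))^{2^{q+2}−2} · u₂² = u₁^d u₂^d`. -/
theorem stmt5 (q : ℕ) :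
    Ideal.Quotient.mk (truncIdeal 2 (3 * 2 ^ (q + 1) - 2))
        ((X 0 * X 1 * (X 0 + X 1)) ^ (2 ^ (q + 2) - 2) * X 1 ^ 2) =
      Ideal.Quotient.mk (truncIdeal 2 (3 * 2 ^ (q + 1) - 2))
        (X 0 ^ (3 * 2 ^ (q + 1) - 2) * X 1 ^ (3 * 2 ^ (q + 1) - 2)) := by
  have h1 : 2 ^ (q + 1) = 2 * 2 ^ q := by ring
  have h2 : 2 ^ (q + 2) = 4 * 2 ^ q := by ring
  have h3 : 2 ^ (q + 1 + 2) = 8 * 2 ^ q := by ring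
  have hq : 1 ≤ 2 ^ q := Nat.one_le_two_pow
  rw [mul_mul_add_pow_two_pow_sub_two_mul_sq, map_sum, sum_eq_single (2 ^ q)]
  · congr 3 <;> omega
  · intro i hi hne
    rw [mem_range] at hi
    exact Ideal.Quotient.eq_zero_iff_mem.mpr (X_pow_mul_X_pow_mem_truncIdeal _ _ (by omega))
  · intro h
    exact absurd (mem_range.mpr (by omega)) h
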